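/- Let f : B → A be a local ring homomorphism and suppose A is a local ring. Then B is a local ring and f⁻¹(rad A) = rad B. -/

import Mathlib

/-!
Reflecting invertibility of `1 × 1` matrices already makes `f` a local homomorphism in the usual
sense, so `B` is local. In a (noncommutative) local ring the Jacobson radical is exactly the set of
non-units: if `a * b = 1` then `b * a` is an idempotent, hence `0` or `1`, so one-sided inverses are
two-sided, and a non-unit `x` makes every `y * x` a non-unit and hence every `y * x + 1` a unit.
As `f` both preserves and reflects units, `f⁻¹(rad A) = rad B`.
-/

/-- A ring homomorphism is *local* if it reflects invertibility of square matrices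
of every size. -/
def MatLocal {B A : Type*} [Ring B] [Ring A] (f : B →+* A) : Prop :=
  ∀ (n : ℕ) (α : Matrix (Fin n) (Fin n) B), IsUnit (α.map f) → IsUnit α

namespace IsLocalRing

variable {R : Type*} [Ring R] [IsLocalRing R]

theorem eq_zero_or_eq_one_of_isIdempotentElem {e : R} (he : IsIdempotentElem e) :
    e = 0 ∨ e = 1 := by
  rcases isUnit_or_isUnit_of_add_one (add_sub_cancel e 1) with h | h
  · exact .inr ((IsIdempotentElem.iff_eq_one_of_isUnit h).mp he)
  · exact .inl (by simpa using (IsIdempotentElem.iff_eq_one_of_isUnit h).mp he.one_sub)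

instance toIsDedekindFiniteMonoid : IsDedekindFiniteMonoid R where
  mul_eq_one_symm {a b} hab := by
    have he : IsIdempotentElem (b * a) := by
      rw [IsIdempotentElem, mul_assoc, ← mul_assoc a, hab, one_mul]
    refine (eq_zero_or_eq_one_of_isIdempotentElem he).resolve_left fun hba =>
      one_ne_zero (α := R) ?_
    calc (1 : R) = a * (b * a) * b := by rw [← mul_assoc, hab, one_mul, hab]
      _ = 0 := by rw [hba, mul_zero, zero_mul]

theorem mem_jacobson_bot_iff_not_isUnit {x : R} :
    x ∈ Ideal.jacobson (⊥ : Ideal R) ↔ ¬IsUnit x := by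
  refine ⟨fun hx hu => ?_, fun hx => Ideal.mem_jacobson_iff.mpr fun y => ?_⟩
  · exact bot_ne_top (Ideal.jacobson_eq_top_iff.mp (Ideal.eq_top_of_isUnit_mem _ hx hu))
  · have hyx : ¬IsUnit (-(y * x)) := fun h => hx (isUnit_of_mul_isUnit_right (by simpa using h))
    have hu : IsUnit (y * x + 1) :=
      (isUnit_or_isUnit_of_add_one (neg_add_cancel_left (y * x) 1)).resolve_left hyx
    obtain ⟨z, hz⟩ := isUnit_iff_exists_inv'.mp hu
    exact ⟨z, by rw [Ideal.mem_bot, ← hz]; noncomm_ring⟩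

end IsLocalRing

theorem MatLocal.isLocalHom {B A : Type*} [Ring B] [Ring A] {f : B →+* A} (hf : MatLocal f) :
    IsLocalHom f where
  map_nonunit x hx := by
    let eB : Matrix (Fin 1) (Fin 1) B ≃* B := Matrix.uniqueRingEquiv.toMulEquiv
    let eA : Matrix (Fin 1) (Fin 1) A ≃* A := Matrix.uniqueRingEquiv.toMulEquiv
    have hmap : (eB.symm x).map f = eA.symm (f x) := rfl
    have := hf 1 (eB.symm x) (by rwa [hmap, MulEquiv.isUnit_map])
    rwa [MulEquiv.isUnit_map] at this

/-- If `f : B → A` is a local homomorphism and `A` is a local ring, then `B` is a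
local ring and `f⁻¹(rad A) = rad B`. -/
theorem stmt8 {B A : Type*} [Ring B] [Ring A] [IsLocalRing A]
    (f : B →+* A) (hf : MatLocal f) :
    IsLocalRing B ∧
      ∀ x : B, f x ∈ Ideal.jacobson (⊥ : Ideal A) ↔ x ∈ Ideal.jacobson (⊥ : Ideal B) := by
  have : IsLocalHom f := hf.isLocalHom
  have hB : IsLocalRing B := f.domain_isLocalRing
  refine ⟨hB, fun x => ?_⟩
  simp only [IsLocalRing.mem_jacobson_bot_iff_not_isUnit, isUnit_map_iff]
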